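/- The function F : ℝ³ → ℝ defined by F(t₁,t₂,t₃) = (1/2)t₁²t₃ + (1/2)t₁t₂² − (1/24)t₂⁴ + t₂·exp(t₃) satisfies the WDVV associativity equations: with η_{αβ} = ∂³F/∂t₁∂t_α∂t_β (the constant matrix with η₁₃ = η₃₁ = 1, η₂₂ = 1, other entries 0) and inverse η^{αβ}, one has Σ_{μ,ν} (∂³F/∂t_α∂t_β∂t_μ)·η^{μν}·(∂³F/∂t_ν∂t_γ∂t_δ) = Σ_{μ,ν} (∂³F/∂t_δ∂t_β∂t_μ)·η^{μν}·(∂³F/∂t_ν∂t_γ∂t_α) for all indices α,β,γ,δ ∈ {1,2,3} and all points of ℝ³. -/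

import Mathlib

/-! The third derivatives of a prepotential of the form `½t₁²t₃ + ½t₁t₂² + f(t₂, t₃)` equal
`η_{βγ}` as soon as one index is `1`, so the WDVV system collapses to Dubrovin's single equation
`f₃₃₃ = f₂₂₃² − f₂₂₂ f₂₃₃`. For `f = −t₂⁴/24 + t₂e^{t₃}` one has `f₂₂₂ = −t₂`, `f₂₂₃ = 0`,
`f₂₃₃ = e^{t₃}`, `f₃₃₃ = t₂e^{t₃}`, and the equation holds. -/

open Real

/-- Partial derivative of a function of `n` real variables in the `i`-th coordinate
direction. -/
noncomputable def pd {n : ℕ} (i : Fin n) (f : (Fin n → ℝ) → ℝ) : (Fin n → ℝ) → ℝ :=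
  fun t => fderiv ℝ f t (Pi.single i 1)

/-- The prepotential of the Frobenius manifold `ℂ³/W̃⁽¹⁾(A₂)`:
`F = ½t₁²t₃ + ½t₁t₂² − (1/24)t₂⁴ + t₂ e^{t₃}`. -/
noncomputable def Fa2 : (Fin 3 → ℝ) → ℝ :=
  fun t => (1/2) * (t 0)^2 * t 2 + (1/2) * t 0 * (t 1)^2 - (1/24) * (t 1)^4
    + t 1 * Real.exp (t 2)

section PartialDerivativeRules

variable {n : ℕ} (i : Fin n) {f g : (Fin n → ℝ) → ℝ}

theorem pd_const (c : ℝ) : pd i (fun _ => c) = fun _ => 0 := by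
  ext t; simp [pd]

theorem pd_apply (j : Fin n) :
    pd i (fun t => t j) = fun _ => (Pi.single i 1 : Fin n → ℝ) j := by
  ext t; simp [pd, fderiv_apply]

theorem pd_add (hf : Differentiable ℝ f) (hg : Differentiable ℝ g) :
    pd i (fun t => f t + g t) = fun t => pd i f t + pd i g t := by
  ext t; simp [pd, fderiv_fun_add (hf t) (hg t)]

theorem pd_sub (hf : Differentiable ℝ f) (hg : Differentiable ℝ g) :
    pd i (fun t => f t - g t) = fun t => pd i f t - pd i g t := by
  ext t; simp [pd, fderiv_fun_sub (hf t) (hg t)]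

theorem pd_mul (hf : Differentiable ℝ f) (hg : Differentiable ℝ g) :
    pd i (fun t => f t * g t) = fun t => pd i f t * g t + f t * pd i g t := by
  ext t
  simp only [pd, fderiv_fun_mul (hf t) (hg t), add_apply, smul_apply,
    smul_eq_mul]
  ring

theorem pd_pow (hf : Differentiable ℝ f) (k : ℕ) :
    pd i (fun t => f t ^ k) = fun t => k * f t ^ (k - 1) * pd i f t := by
  ext t; simp [pd, fderiv_fun_pow k (hf t)]

theorem pd_exp (hf : Differentiable ℝ f) :
    pd i (fun t => exp (f t)) = fun t => exp (f t) * pd i f t := by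
  ext t; simp [pd, fderiv_exp (hf t)]

end PartialDerivativeRules

/-- The third derivatives of `½t₀²t₂ + ½t₀t₁² + f(t₁, t₂)` (indices from `0`), where
`a, b, c, d` are `f₁₁₁, f₁₁₂, f₁₂₂, f₂₂₂`. -/
def normalFormThirdDerivs (a b c d : ℝ) : Fin 3 → Fin 3 → Fin 3 → ℝ :=
  ![![![0, 0, 1], ![0, 1, 0], ![1, 0, 0]],
    ![![0, 1, 0], ![1, a, b], ![0, b, c]],
    ![![1, 0, 0], ![0, b, c], ![0, c, d]]]

theorem normalFormThirdDerivs_zero (a b c d : ℝ) :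
    normalFormThirdDerivs a b c d 0 = !![0, 0, 1; 0, 1, 0; 1, 0, 0] := by
  ext i j
  fin_cases i <;> fin_cases j <;> rfl

theorem normalFormThirdDerivs_wdvv {a b c d : ℝ} (h : d = b ^ 2 - a * c) (α β γ δ : Fin 3) :
    let C := normalFormThirdDerivs a b c d
    let η : Matrix (Fin 3) (Fin 3) ℝ := !![0, 0, 1; 0, 1, 0; 1, 0, 0]
    ∑ μ, ∑ ν, C α β μ * η μ ν * C ν γ δ = ∑ μ, ∑ ν, C δ β μ * η μ ν * C ν γ α := by
  subst h
  intro C η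
  fin_cases α <;> fin_cases β <;> fin_cases γ <;> fin_cases δ <;>
    simp only [C, η, Fin.sum_univ_three, normalFormThirdDerivs, Matrix.of_apply, Matrix.cons_val,
      Fin.reduceFinMk] <;> ring

theorem pd_pd_Fa2 (i j : Fin 3) : pd i (pd j Fa2) = fun t =>
    !![t 2, t 1, t 0; t 1, t 0 - (1/2) * t 1 ^ 2, exp (t 2); t 0, exp (t 2), t 1 * exp (t 2)] i j := by
  unfold Fa2
  fin_cases i <;> fin_cases j <;> ext t <;>
    simp (disch := fun_prop) only [pd_const, pd_apply, pd_add, pd_sub, pd_mul, pd_pow, pd_exp,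
      Pi.single_apply, Fin.reduceFinMk, Fin.reduceEq, ite_true, ite_false, Matrix.cons_val,
      Matrix.of_apply] <;> ring

theorem pd_pd_pd_Fa2 (t : Fin 3 → ℝ) (α β γ : Fin 3) :
    pd α (pd β (pd γ Fa2)) t
      = normalFormThirdDerivs (-t 1) 0 (exp (t 2)) (t 1 * exp (t 2)) α β γ := by
  rw [pd_pd_Fa2]
  fin_cases α <;> fin_cases β <;> fin_cases γ <;>
    simp (disch := fun_prop) only [pd_const, pd_apply, pd_sub, pd_mul, pd_pow, pd_exp,
      Pi.single_apply, Fin.reduceFinMk, Fin.reduceEq, ite_true, ite_false, Matrix.cons_val,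
      Matrix.of_apply, normalFormThirdDerivs] <;> ring

/-- The prepotential `F = ½t₁²t₃ + ½t₁t₂² − (1/24)t₂⁴ + t₂e^{t₃}` of `ℂ³/W̃⁽¹⁾(A₂)`
satisfies the WDVV associativity equations: `η_{αβ} = ∂³F/∂t₁∂t_α∂t_β` is the constant
matrix with `η₁₃ = η₃₁ = η₂₂ = 1` (other entries `0`), which is its own inverse
`η^{αβ}`, and `Σ_{μν} F_{αβμ} η^{μν} F_{νγδ} = Σ_{μν} F_{δβμ} η^{μν} F_{νγα}`. -/
theorem WDVV_tildeW1_A2 :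
    (∀ t : Fin 3 → ℝ, ∀ α β : Fin 3,
      pd 0 (pd α (pd β Fa2)) t
        = (!![0, 0, 1; 0, 1, 0; 1, 0, 0] : Matrix (Fin 3) (Fin 3) ℝ) α β) ∧
    (∀ t : Fin 3 → ℝ, ∀ α β γ δ : Fin 3,
      (∑ μ, ∑ ν, pd α (pd β (pd μ Fa2)) t
          * (!![0, 0, 1; 0, 1, 0; 1, 0, 0] : Matrix (Fin 3) (Fin 3) ℝ) μ ν
          * pd ν (pd γ (pd δ Fa2)) t)
        = ∑ μ, ∑ ν, pd δ (pd β (pd μ Fa2)) t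
          * (!![0, 0, 1; 0, 1, 0; 1, 0, 0] : Matrix (Fin 3) (Fin 3) ℝ) μ ν
          * pd ν (pd γ (pd α Fa2)) t) := by
  refine ⟨fun t α β => ?_, fun t α β γ δ => ?_⟩
  · rw [pd_pd_pd_Fa2, normalFormThirdDerivs_zero]
  · simp only [pd_pd_pd_Fa2]
    exact normalFormThirdDerivs_wdvv (by ring) α β γ δ
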